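/- arXiv:1809.03771 — 2 statements merged into one kernel-verified Lean document; each statement's English description precedes it below -/
import Mathlib

section
/- Let G be a uniformly convex Banach space satisfying Opial's condition, J a nonempty closed convex subset of G, and S : J → J a nonexpansive mapping whose fixed point set F(S) is nonempty. Let {δₙ} satisfy 0 < w ≤ δₙ ≤ v < 1 for some constants w, v, and let {cₙ} be generated by the iteration (1.2). Then {cₙ} converges weakly to a fixed point of S. -/
/-!
The iterates are Fejér monotone with respect to every fixed point `q`, so `‖cₙ - q‖` converges
and the sequence is bounded. Uniform convexity (Schu's lemma) turns the convergence of
`‖cₙ - q‖` and `‖bₙ - q‖` to the same limit into `‖aₙ - S aₙ‖ → 0`, hence `‖cₙ - S cₙ‖ → 0`.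
By Opial's condition every weak subsequential limit is then a fixed point (demiclosedness), and
two of them coincide because `‖cₙ - q‖` converges for both; so the whole sequence converges
weakly.

Weak subsequential limits exist because, in a uniformly convex Banach space, the closed convex
hulls of `{xₙ | n ∈ A}`, `A` in an ultrafilter, have a common point (points of almost minimal
norm form a Cauchy filter), which is the weak limit along the ultrafilter; and inside the
separable closed span of the sequence, countably many functionals separate points, which
yields a subsequence.
-/

open Filter Set Metric Topology TopologicalSpace

section

variable {E : Type*} [NormedAddCommGroup E] [NormedSpace ℝ E]

theorem exists_forall_norm_add_le_two_sub_mul [UniformConvexSpace E] {ε : ℝ} (hε : 0 < ε)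
    (R : ℝ) : ∃ δ > 0, ∀ ρ ≤ R, ∀ x y : E, ‖x‖ ≤ ρ → ‖y‖ ≤ ρ → ε ≤ ‖x - y‖ →
      ‖x + y‖ ≤ (2 - δ) * ρ := by
  rcases le_or_gt R 0 with hR | hR
  · refine ⟨1, one_pos, fun ρ hρR x y hx hy hxy => ?_⟩
    linarith [norm_sub_le x y]
  obtain ⟨δ, hδ, huc⟩ := exists_forall_closed_ball_dist_add_le_two_sub E (div_pos hε hR)
  refine ⟨δ, hδ, fun ρ hρR x y hx hy hxy => ?_⟩
  have hρ : 0 < ρ := by linarith [norm_sub_le x y]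
  have hscale : ∀ z : E, ‖ρ⁻¹ • z‖ = ‖z‖ / ρ := fun z => by
    rw [norm_smul_of_nonneg (inv_nonneg.2 hρ.le), inv_mul_eq_div]
  have hsum := huc (x := ρ⁻¹ • x) (y := ρ⁻¹ • y)
    (by rw [hscale]; exact div_le_one_of_le₀ hx hρ.le)
    (by rw [hscale]; exact div_le_one_of_le₀ hy hρ.le)
    (by rw [← smul_sub, hscale]; calc ε / R ≤ ε / ρ := by gcongr
                                   _ ≤ ‖x - y‖ / ρ := by gcongr)
  rwa [← smul_add, hscale, div_le_iff₀ hρ] at hsum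

theorem norm_one_sub_smul_add_smul_le {x y : E} {ρ δ t : ℝ} (hx : ‖x‖ ≤ ρ) (hy : ‖y‖ ≤ ρ)
    (hxy : ‖x + y‖ ≤ (2 - δ) * ρ) (ht₀ : 0 ≤ t) (ht₁ : t ≤ 1) :
    ‖(1 - t) • x + t • y‖ ≤ (1 - min t (1 - t) * δ) * ρ := by
  have key : ∀ x y : E, ‖x‖ ≤ ρ → ‖x + y‖ ≤ (2 - δ) * ρ → ∀ s, 0 ≤ s → s ≤ 1 / 2 →
      ‖(1 - s) • x + s • y‖ ≤ (1 - s * δ) * ρ := by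
    intro x y hx hxy s hs₀ hs₁
    calc ‖(1 - s) • x + s • y‖ = ‖(1 - 2 * s) • x + s • (x + y)‖ := by congr 1; module
      _ ≤ (1 - 2 * s) * ‖x‖ + s * ‖x + y‖ := by
        refine (norm_add_le _ _).trans_eq ?_
        rw [norm_smul_of_nonneg (by linarith), norm_smul_of_nonneg hs₀]
      _ ≤ (1 - 2 * s) * ρ + s * ((2 - δ) * ρ) := by gcongr; linarith
      _ = (1 - s * δ) * ρ := by ring
  rcases le_total t (1 / 2) with ht | ht
  · rw [min_eq_left (by linarith)]
    exact key x y hx hxy t ht₀ ht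
  · rw [min_eq_right (by linarith)]
    have := key y x hy (by rwa [add_comm]) (1 - t) (by linarith) (by linarith)
    rwa [sub_sub_cancel, add_comm] at this

theorem exists_forall_norm_sub_lt_of_le_norm_add [UniformConvexSpace E] (r : ℝ) {ε : ℝ}
    (hε : 0 < ε) : ∃ η > 0, ∀ x y : E, ‖x‖ ≤ r + η → ‖y‖ ≤ r + η → 2 * (r - η) ≤ ‖x + y‖ →
      ‖x - y‖ < ε := by
  obtain ⟨δ, hδ, huc⟩ := exists_forall_norm_add_le_two_sub_mul (E := E) hε (r + ε)
  refine ⟨min (ε / 4) (δ * ε / 16), by positivity, fun x y hx hy hxy => ?_⟩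
  set η := min (ε / 4) (δ * ε / 16)
  have hη₁ : η ≤ ε / 4 := min_le_left _ _
  have hη₂ : η ≤ δ * ε / 16 := min_le_right _ _
  have hη : 0 < η := by positivity
  by_contra! hfar
  have hr : ε / 4 ≤ r := by linarith [norm_sub_le x y]
  have hsum := huc (r + η) (by linarith) x y hx hy hfar
  have : δ * (ε / 4) ≤ δ * r := by gcongr
  nlinarith [mul_pos hδ hη]

theorem exists_forall_mem_closure_of_directedOn [CompleteSpace E] [UniformConvexSpace E]
    {𝒞 : Set (Set E)} (h𝒞 : 𝒞.Nonempty) (hdir : DirectedOn (· ⊇ ·) 𝒞)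
    (hconv : ∀ C ∈ 𝒞, Convex ℝ C) (hne : ∀ C ∈ 𝒞, C.Nonempty) {M : ℝ}
    (hM : ∀ C ∈ 𝒞, ∀ p ∈ C, ‖p‖ ≤ M) : ∃ g, ∀ C ∈ 𝒞, g ∈ closure C := by
  set r := sSup ((infDist 0) '' 𝒞)
  have hbdd : BddAbove ((infDist 0) '' 𝒞) := by
    refine ⟨M, ?_⟩
    rintro _ ⟨C, hC, rfl⟩
    obtain ⟨p, hp⟩ := hne C hC
    exact (infDist_le_dist_of_mem hp).trans (by simpa using hM C hC p hp)
  -- by uniform convexity, the points of the sets `C ∈ 𝒞` with norm close to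
  -- `r = sup_{C ∈ 𝒞} dist(0, C)` form a Cauchy filter
  set H : Set E × ℝ → Set E := fun i => {p ∈ i.1 | ‖p‖ < r + i.2}
  set I : Set (Set E × ℝ) := {i | i.1 ∈ 𝒞 ∧ 0 < i.2}
  set 𝓗 : Filter E := ⨅ i ∈ I, 𝓟 (H i)
  have hbasis : 𝓗.HasBasis (· ∈ I) H := by
    refine hasBasis_biInf_principal ?_ ⟨(h𝒞.some, 1), h𝒞.some_mem, one_pos⟩
    rintro ⟨C, ε⟩ ⟨hC, hε⟩ ⟨C', ε'⟩ ⟨hC', hε'⟩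
    obtain ⟨C'', hC'', hCC'', hC'C''⟩ := hdir C hC C' hC'
    exact ⟨(C'', min ε ε'), ⟨hC'', lt_min hε hε'⟩,
      fun p hp => ⟨hCC'' hp.1, hp.2.trans_le (by simp)⟩,
      fun p hp => ⟨hC'C'' hp.1, hp.2.trans_le (by simp)⟩⟩
  have : 𝓗.NeBot := by
    refine hbasis.neBot_iff.2 fun {i} hi => ?_
    obtain ⟨p, hp, hpr⟩ := (infDist_lt_iff (hne i.1 hi.1)).1
      ((le_csSup hbdd ⟨i.1, hi.1, rfl⟩).trans_lt (lt_add_of_pos_right r hi.2))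
    exact ⟨p, hp, by simpa using hpr⟩
  have hcauchy : Cauchy 𝓗 := by
    refine Metric.cauchy_iff.2 ⟨inferInstance, fun ε hε => ?_⟩
    obtain ⟨η, hη, hclose⟩ := exists_forall_norm_sub_lt_of_le_norm_add (E := E) r hε
    obtain ⟨_, ⟨C, hC, rfl⟩, hCr⟩ := exists_lt_of_lt_csSup (h𝒞.image _) (sub_lt_self r hη)
    refine ⟨H (C, η), hbasis.mem_of_mem ⟨hC, hη⟩, fun p hp q hq => ?_⟩
    rw [dist_eq_norm]
    refine hclose p q hp.2.le hq.2.le ?_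
    have hmid : (2⁻¹ : ℝ) • (p + q) ∈ C := by
      rw [smul_add]
      exact hconv C hC hp.1 hq.1 (by norm_num) (by norm_num) (by norm_num)
    have := infDist_le_dist_of_mem hmid (x := 0)
    rw [dist_zero_left, norm_smul_of_nonneg (by norm_num)] at this
    linarith
  obtain ⟨g, hg⟩ := CompleteSpace.complete hcauchy
  refine ⟨g, fun C hC => mem_closure_of_tendsto (f := id) (b := 𝓗) hg ?_⟩
  exact mem_of_superset (hbasis.mem_of_mem (i := (C, 1)) ⟨hC, one_pos⟩) fun p hp => hp.1

theorem exists_forall_mem_closure_convexHull_image [CompleteSpace E] [UniformConvexSpace E]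
    {ι : Type*} {l : Filter ι} [l.NeBot] {x : ι → E} {M : ℝ} (hM : ∀ i, ‖x i‖ ≤ M) :
    ∃ g, ∀ A ∈ l, g ∈ closure (convexHull ℝ (x '' A)) := by
  obtain ⟨g, hg⟩ := exists_forall_mem_closure_of_directedOn
    (𝒞 := (fun A => convexHull ℝ (x '' A)) '' l.sets) ⟨_, univ, univ_mem, rfl⟩
    (by
      rintro _ ⟨A, hA, rfl⟩ _ ⟨B, hB, rfl⟩
      exact ⟨_, ⟨A ∩ B, inter_mem hA hB, rfl⟩, convexHull_mono (image_mono inter_subset_left),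
        convexHull_mono (image_mono inter_subset_right)⟩)
    (by rintro _ ⟨A, -, rfl⟩; exact convex_convexHull ℝ _)
    (by rintro _ ⟨A, hA, rfl⟩; exact ((l.nonempty_of_mem hA).image x).convexHull)
    (M := M)
    (by
      rintro _ ⟨A, -, rfl⟩ p hp
      have hball : convexHull ℝ (x '' A) ⊆ closedBall 0 M :=
        convexHull_min (by rintro _ ⟨i, -, rfl⟩; simpa using hM i) (convex_closedBall 0 M)
      simpa using hball hp)
  exact ⟨g, fun A hA => hg _ ⟨A, hA, rfl⟩⟩

def WeakTendsto {ι : Type*} (x : ι → E) (l : Filter ι) (p : E) : Prop :=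
  ∀ f : E →L[ℝ] ℝ, Tendsto (fun i => f (x i)) l (𝓝 (f p))

theorem WeakTendsto.comp {ι κ : Type*} {x : ι → E} {l : Filter ι} {p : E}
    (hx : WeakTendsto x l p) {φ : κ → ι} {l' : Filter κ} (hφ : Tendsto φ l' l) :
    WeakTendsto (x ∘ φ) l' p :=
  fun f => (hx f).comp hφ

theorem weakTendsto_of_forall_mem_closure_convexHull {ι : Type*} {U : Ultrafilter ι}
    {x : ι → E} {g : E} (hg : ∀ A ∈ U, g ∈ closure (convexHull ℝ (x '' A))) :
    WeakTendsto x U g := by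
  have lower : ∀ (f : E →L[ℝ] ℝ) (a : ℝ), a < f g → ∀ᶠ i in (U : Filter ι), a < f (x i) := by
    intro f a ha
    by_contra hnot
    have hsub : closure (convexHull ℝ (x '' {i | ¬a < f (x i)})) ⊆ {p | f p ≤ a} :=
      closure_minimal
        (convexHull_min (by rintro _ ⟨i, hi, rfl⟩; exact not_lt.1 hi)
          (convex_halfSpace_le f.toLinearMap.isLinear a))
        (isClosed_le f.continuous continuous_const)
    exact (hsub (hg _ (Ultrafilter.eventually_not.2 hnot))).not_gt ha
  refine fun f => tendsto_order.2 ⟨lower f, fun b hb => ?_⟩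
  simpa using lower (-f) (-b) (by simpa using hb)

theorem TopologicalSpace.IsSeparable.exists_seq_dual_forall_eq_zero {s : Set E}
    (hs : IsSeparable s) :
    ∃ F : ℕ → E →L[ℝ] ℝ, ∀ z ∈ s, (∀ i, F i z = 0) → z = 0 := by
  obtain ⟨t, htc, hst⟩ := hs
  obtain ⟨d, hd⟩ := (htc.insert 0).exists_eq_range (insert_nonempty 0 t)
  choose F hF hFd using fun i => exists_dual_vector'' ℝ (d i)
  refine ⟨F, fun z hz hzero => norm_le_zero_iff.1 (le_of_forall_pos_lt_add fun ε hε => ?_)⟩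
  have hzd : z ∈ closure (range d) := hd ▸ closure_mono (subset_insert 0 t) (hst hz)
  obtain ⟨_, ⟨i, rfl⟩, hi⟩ := Metric.mem_closure_iff.1 hzd (ε / 2) (half_pos hε)
  rw [dist_eq_norm] at hi
  have hdi : ‖d i‖ ≤ ‖z - d i‖ :=
    calc ‖d i‖ = F i (d i - z) := by simp [hFd, hzero]
      _ ≤ ‖F i‖ * ‖d i - z‖ := (le_abs_self _).trans ((F i).le_opNorm _)
      _ ≤ ‖z - d i‖ := by rw [norm_sub_rev]; exact mul_le_of_le_one_left (norm_nonneg _) (hF i)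
  linarith [norm_le_insert' z (d i)]

theorem exists_strictMono_weakTendsto [CompleteSpace E] [UniformConvexSpace E] {x : ℕ → E}
    {M : ℝ} (hM : ∀ n, ‖x n‖ ≤ M) {U : Ultrafilter ℕ} (hU : (U : Filter ℕ) ≤ atTop) {g : E}
    (hg : ∀ A ∈ U, g ∈ closure (convexHull ℝ (x '' A))) :
    ∃ φ : ℕ → ℕ, StrictMono φ ∧ WeakTendsto (x ∘ φ) atTop g := by
  set V := (Submodule.span ℝ (range x)).topologicalClosure
  have hV : IsSeparable (V : Set E) := (countable_range x).isSeparable.span.closure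
  have hKV : ∀ s ⊆ range x, closure (convexHull ℝ s) ⊆ V := fun s hs =>
    closure_mono (convexHull_min (hs.trans Submodule.subset_span) (Submodule.span ℝ _).convex)
  obtain ⟨F, hF⟩ := hV.exists_seq_dual_forall_eq_zero
  set Φ : E → ℕ → ℝ := fun z i => F i z
  have hgU : Tendsto (Φ ∘ x) ↑U (𝓝 (Φ g)) :=
    tendsto_pi_nhds.2 fun i => weakTendsto_of_forall_mem_closure_convexHull hg (F i)
  obtain ⟨φ, hφ, hφg⟩ := subseq_tendsto_of_neBot (f := 𝓝 (Φ g)) (u := Φ ∘ x)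
    ((U.map (Φ ∘ x)).neBot.mono (le_inf hgU (map_mono hU)))
  refine ⟨φ, hφ, fun f => (tendsto_iff_ultrafilter _ _ _).2 fun W hW => ?_⟩
  obtain ⟨h, hh⟩ := exists_forall_mem_closure_convexHull_image (l := ↑W) (x := x ∘ φ)
    fun n => hM (φ n)
  have hWh := weakTendsto_of_forall_mem_closure_convexHull hh
  have hΦ : Φ h = Φ g :=
    tendsto_nhds_unique (tendsto_pi_nhds.2 fun i => hWh (F i)) (hφg.mono_left hW)
  have hhg : h = g := sub_eq_zero.1 <| hF _
    (V.sub_mem (hKV _ (by rw [image_univ]; exact range_comp_subset_range φ x) (hh univ univ_mem))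
      (hKV _ (image_subset_range _ _) (hg univ univ_mem)))
    fun i => by simp [map_sub, congrFun hΦ i, Φ]
  exact hhg ▸ hWh f

def OpialProperty (E : Type*) [NormedAddCommGroup E] [NormedSpace ℝ E] : Prop :=
  ∀ (x : ℕ → E) (p : E), WeakTendsto x atTop p → ∀ y : E, y ≠ p →
    limsup (fun n => ‖x n - p‖) atTop < limsup (fun n => ‖x n - y‖) atTop

namespace OpialProperty

theorem lt_of_tendsto (hO : OpialProperty E) {x : ℕ → E} {p y : E} (hx : WeakTendsto x atTop p)
    (hy : y ≠ p) {L L' : ℝ} (hL : Tendsto (fun n => ‖x n - p‖) atTop (𝓝 L))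
    (hL' : Tendsto (fun n => ‖x n - y‖) atTop (𝓝 L')) : L < L' := by
  simpa only [hL.limsup_eq, hL'.limsup_eq] using hO x p hx y hy

theorem eq_of_weakTendsto_comp (hO : OpialProperty E) {x : ℕ → E} {p p' : E} {L L' : ℝ}
    (hL : Tendsto (fun n => ‖x n - p‖) atTop (𝓝 L))
    (hL' : Tendsto (fun n => ‖x n - p'‖) atTop (𝓝 L')) {φ ψ : ℕ → ℕ} (hφ : StrictMono φ)
    (hψ : StrictMono ψ) (hp : WeakTendsto (x ∘ φ) atTop p)
    (hp' : WeakTendsto (x ∘ ψ) atTop p') : p = p' := by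
  by_contra hne
  have := hO.lt_of_tendsto hp (Ne.symm hne) (hL.comp hφ.tendsto_atTop)
    (hL'.comp hφ.tendsto_atTop)
  have := hO.lt_of_tendsto hp' hne (hL'.comp hψ.tendsto_atTop) (hL.comp hψ.tendsto_atTop)
  linarith

/-- The demiclosedness principle. -/
theorem apply_eq_of_weakTendsto (hO : OpialProperty E) {J : Set E} {S : E → E}
    (hS : ∀ u ∈ J, ∀ v ∈ J, ‖S u - S v‖ ≤ ‖u - v‖) {y : ℕ → E} (hyJ : ∀ k, y k ∈ J) {M : ℝ}
    (hM : ∀ k, ‖y k‖ ≤ M) {g : E} (hg : g ∈ J) (hyg : WeakTendsto y atTop g)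
    (hreg : Tendsto (fun k => ‖y k - S (y k)‖) atTop (𝓝 0)) : S g = g := by
  by_contra hne
  set R := M + ‖g‖ + ‖S g‖
  have hbound : ∀ k, (‖y k - g‖, ‖y k - S g‖) ∈ Icc ((0 : ℝ), (0 : ℝ)) (R, R) := fun k =>
    ⟨⟨norm_nonneg _, norm_nonneg _⟩,
      ⟨by linarith [norm_sub_le (y k) g, hM k, norm_nonneg (S g)],
        by linarith [norm_sub_le (y k) (S g), hM k, norm_nonneg g]⟩⟩
  obtain ⟨⟨α, β⟩, -, φ, hφ, hlim⟩ := tendsto_subseq_of_bounded (isBounded_Icc _ _) hbound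
  have hα := (continuous_fst.tendsto _).comp hlim
  have hβ := (continuous_snd.tendsto _).comp hlim
  have hlt : α < β := hO.lt_of_tendsto (hyg.comp hφ.tendsto_atTop) hne hα hβ
  have hle : β ≤ α := by
    refine le_of_tendsto_of_tendsto' hβ (by simpa using (hreg.comp hφ.tendsto_atTop).add hα)
      fun k => ?_
    calc ‖y (φ k) - S g‖ ≤ ‖y (φ k) - S (y (φ k))‖ + ‖S (y (φ k)) - S g‖ :=
          norm_sub_le_norm_sub_add_norm_sub _ _ _
      _ ≤ ‖y (φ k) - S (y (φ k))‖ + ‖y (φ k) - g‖ := by gcongr; exact hS _ (hyJ _) _ hg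
  linarith

/-- Opial's lemma. -/
theorem exists_weakTendsto [CompleteSpace E] [UniformConvexSpace E] (hO : OpialProperty E)
    {x : ℕ → E} {M : ℝ} (hM : ∀ n, ‖x n‖ ≤ M) {F : Set E}
    (hlim : ∀ p ∈ F, ∃ L, Tendsto (fun n => ‖x n - p‖) atTop (𝓝 L))
    (hF : ∀ g ∈ closure (convexHull ℝ (range x)), ∀ φ : ℕ → ℕ, StrictMono φ →
      WeakTendsto (x ∘ φ) atTop g → g ∈ F) :
    ∃ g ∈ F, WeakTendsto x atTop g := by
  have hsub : ∀ W : Ultrafilter ℕ, (W : Filter ℕ) ≤ atTop →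
      ∃ g ∈ F, WeakTendsto x (W : Filter ℕ) g ∧
        ∃ φ : ℕ → ℕ, StrictMono φ ∧ WeakTendsto (x ∘ φ) atTop g := by
    intro W hW
    obtain ⟨g, hg⟩ := exists_forall_mem_closure_convexHull_image (l := ↑W) hM
    obtain ⟨φ, hφ, hφg⟩ := exists_strictMono_weakTendsto hM hW hg
    have hgK : g ∈ closure (convexHull ℝ (range x)) := image_univ (f := x) ▸ hg univ univ_mem
    exact ⟨g, hF g hgK φ hφ hφg, weakTendsto_of_forall_mem_closure_convexHull hg, φ, hφ, hφg⟩
  obtain ⟨g, hgF, -, φ, hφ, hφg⟩ := hsub (Ultrafilter.of atTop) (Ultrafilter.of_le _)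
  refine ⟨g, hgF, fun f => (tendsto_iff_ultrafilter _ _ _).2 fun W hW => ?_⟩
  obtain ⟨g', hg'F, hg'W, ψ, hψ, hψg'⟩ := hsub W hW
  obtain ⟨L, hL⟩ := hlim g hgF
  obtain ⟨L', hL'⟩ := hlim g' hg'F
  rw [hO.eq_of_weakTendsto_comp hL hL' hφ hψ hφg hψg']
  exact hg'W f

end OpialProperty

/-- Schu's lemma. -/
theorem tendsto_norm_sub_of_tendsto_norm_one_sub_smul_add_smul [UniformConvexSpace E]
    {u v : ℕ → E} {t D : ℕ → ℝ} {m L : ℝ} (hm : 0 < m) (ht : ∀ n, m ≤ t n ∧ t n ≤ 1 - m)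
    (hu : ∀ n, ‖u n‖ ≤ D n) (hv : ∀ n, ‖v n‖ ≤ D n) (hD : Tendsto D atTop (𝓝 L))
    (hcomb : Tendsto (fun n => ‖(1 - t n) • u n + t n • v n‖) atTop (𝓝 L)) :
    Tendsto (fun n => ‖u n - v n‖) atTop (𝓝 0) := by
  refine tendsto_order.2 ⟨fun a ha => .of_forall fun n => ha.trans_le (norm_nonneg _),
    fun ε hε => ?_⟩
  by_contra hfreq
  simp only [not_eventually, not_lt] at hfreq
  obtain ⟨R, hR⟩ := hD.bddAbove_range
  obtain ⟨δ, hδ, huc⟩ := exists_forall_norm_add_le_two_sub_mul (E := E) hε R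
  obtain ⟨φ, hφ, hφε⟩ := extraction_of_frequently_atTop hfreq
  have hpt : ∀ k, ε ≤ 2 * D (φ k) ∧
      ‖(1 - t (φ k)) • u (φ k) + t (φ k) • v (φ k)‖ ≤ (1 - m * δ) * D (φ k) := by
    intro k
    set n := φ k
    have hDn : 0 ≤ D n := (norm_nonneg _).trans (hu n)
    refine ⟨by linarith [norm_sub_le (u n) (v n), hu n, hv n, hφε k], ?_⟩
    have hmin : m ≤ min (t n) (1 - t n) := le_min (ht n).1 (by linarith [(ht n).2])
    calc _ ≤ (1 - min (t n) (1 - t n) * δ) * D n :=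
          norm_one_sub_smul_add_smul_le (hu n) (hv n)
            (huc (D n) (hR ⟨n, rfl⟩) _ _ (hu n) (hv n) (hφε k))
            (by linarith [(ht n).1]) (by linarith [(ht n).2])
      _ ≤ (1 - m * δ) * D n := by gcongr
  have hDφ := hD.comp hφ.tendsto_atTop
  have hεL : ε ≤ 2 * L :=
    ge_of_tendsto (hDφ.const_mul 2) (.of_forall fun k => (hpt k).1)
  have hLL : L ≤ (1 - m * δ) * L :=
    le_of_tendsto_of_tendsto' (hcomb.comp hφ.tendsto_atTop) (hDφ.const_mul _) fun k => (hpt k).2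
  nlinarith [mul_pos hm hδ]

/-- The iteration (1.2), indexed from `0`. -/
structure IsIteration (S : E → E) (δ : ℕ → ℝ) (a b c : ℕ → E) : Prop where
  a_eq : ∀ n, a n = S (c n)
  b_eq : ∀ n, b n = (1 - δ n) • a n + δ n • S (a n)
  c_succ : ∀ n, c (n + 1) = S (b n)

namespace IsIteration

variable {S : E → E} {δ : ℕ → ℝ} {a b c : ℕ → E} {J : Set E}

theorem mem (h : IsIteration S δ a b c) (hJ : Convex ℝ J) (hSJ : MapsTo S J J)
    (hδ : ∀ n, δ n ∈ Icc (0 : ℝ) 1) (hc₀ : c 0 ∈ J) (n : ℕ) :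
    c n ∈ J ∧ a n ∈ J ∧ b n ∈ J := by
  have step : ∀ n, c n ∈ J → c n ∈ J ∧ a n ∈ J ∧ b n ∈ J := fun n hc => by
    have ha : a n ∈ J := h.a_eq n ▸ hSJ hc
    exact ⟨hc, ha, h.b_eq n ▸ hJ ha (hSJ ha) (by linarith [(hδ n).2]) (hδ n).1 (by ring)⟩
  induction n with
  | zero => exact step 0 hc₀
  | succ n ih => exact step _ (h.c_succ n ▸ hSJ ih.2.2)

theorem norm_sub_fixedPoint_le (h : IsIteration S δ a b c)
    (hS : ∀ u ∈ J, ∀ v ∈ J, ‖S u - S v‖ ≤ ‖u - v‖) {n : ℕ} (hn : c n ∈ J ∧ a n ∈ J ∧ b n ∈ J)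
    (hδ : δ n ∈ Icc (0 : ℝ) 1) {q : E} (hq : q ∈ J) (hSq : S q = q) :
    ‖a n - q‖ ≤ ‖c n - q‖ ∧ ‖S (a n) - q‖ ≤ ‖a n - q‖ ∧ ‖b n - q‖ ≤ ‖a n - q‖ ∧
      ‖c (n + 1) - q‖ ≤ ‖b n - q‖ := by
  have hfix : ∀ u ∈ J, ‖S u - q‖ ≤ ‖u - q‖ := fun u hu => by simpa [hSq] using hS u hu q hq
  have hSa := hfix _ hn.2.1
  refine ⟨h.a_eq n ▸ hfix _ hn.1, hSa, ?_, h.c_succ n ▸ hfix _ hn.2.2⟩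
  rw [h.b_eq n, ← mem_closedBall_iff_norm]
  exact convex_closedBall q _ (mem_closedBall_iff_norm.2 le_rfl)
    (mem_closedBall_iff_norm.2 hSa) (by linarith [hδ.2]) hδ.1 (by ring)

theorem antitone_norm_sub_fixedPoint (h : IsIteration S δ a b c)
    (hS : ∀ u ∈ J, ∀ v ∈ J, ‖S u - S v‖ ≤ ‖u - v‖)
    (hmem : ∀ n, c n ∈ J ∧ a n ∈ J ∧ b n ∈ J) (hδ : ∀ n, δ n ∈ Icc (0 : ℝ) 1) {q : E}
    (hq : q ∈ J) (hSq : S q = q) : Antitone (fun n => ‖c n - q‖) :=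
  antitone_nat_of_succ_le fun n => by
    obtain ⟨h₁, -, h₃, h₄⟩ := h.norm_sub_fixedPoint_le hS (hmem n) (hδ n) hq hSq
    linarith

theorem tendsto_norm_sub_fixedPoint (h : IsIteration S δ a b c)
    (hS : ∀ u ∈ J, ∀ v ∈ J, ‖S u - S v‖ ≤ ‖u - v‖)
    (hmem : ∀ n, c n ∈ J ∧ a n ∈ J ∧ b n ∈ J) (hδ : ∀ n, δ n ∈ Icc (0 : ℝ) 1) {q : E}
    (hq : q ∈ J) (hSq : S q = q) :
    Tendsto (fun n => ‖c n - q‖) atTop (𝓝 (⨅ n, ‖c n - q‖)) :=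
  tendsto_atTop_ciInf (h.antitone_norm_sub_fixedPoint hS hmem hδ hq hSq)
    ⟨0, by rintro _ ⟨n, rfl⟩; exact norm_nonneg _⟩

theorem tendsto_norm_a_sub_apply [UniformConvexSpace E] (h : IsIteration S δ a b c)
    (hS : ∀ u ∈ J, ∀ v ∈ J, ‖S u - S v‖ ≤ ‖u - v‖)
    (hmem : ∀ n, c n ∈ J ∧ a n ∈ J ∧ b n ∈ J) {m : ℝ} (hm : 0 < m)
    (hδ : ∀ n, m ≤ δ n ∧ δ n ≤ 1 - m) {q : E} (hq : q ∈ J) (hSq : S q = q) :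
    Tendsto (fun n => ‖a n - S (a n)‖) atTop (𝓝 0) := by
  have hδ' : ∀ n, δ n ∈ Icc (0 : ℝ) 1 := fun n => ⟨by linarith [hδ n], by linarith [hδ n]⟩
  have hle := fun n => h.norm_sub_fixedPoint_le hS (hmem n) (hδ' n) hq hSq
  have hD := h.tendsto_norm_sub_fixedPoint hS hmem hδ' hq hSq
  have hb : Tendsto (fun n => ‖b n - q‖) atTop (𝓝 (⨅ n, ‖c n - q‖)) :=
    tendsto_of_tendsto_of_tendsto_of_le_of_le ((tendsto_add_atTop_iff_nat 1).2 hD) hD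
      (fun n => (hle n).2.2.2) fun n => (hle n).2.2.1.trans (hle n).1
  have hcomb : ∀ n, (1 - δ n) • (a n - q) + δ n • (S (a n) - q) = b n - q := fun n => by
    rw [h.b_eq n]; module
  simpa using tendsto_norm_sub_of_tendsto_norm_one_sub_smul_add_smul hm hδ (fun n => (hle n).1)
    (fun n => (hle n).2.1.trans (hle n).1) hD (by simpa only [hcomb] using hb)

theorem norm_c_succ_sub_apply_le (h : IsIteration S δ a b c)
    (hS : ∀ u ∈ J, ∀ v ∈ J, ‖S u - S v‖ ≤ ‖u - v‖) {n : ℕ}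
    (hn : c n ∈ J ∧ a n ∈ J ∧ b n ∈ J) (hc : c (n + 1) ∈ J) (hδ : δ n ∈ Icc (0 : ℝ) 1) :
    ‖c (n + 1) - S (c (n + 1))‖ ≤ 3 * ‖a n - S (a n)‖ := by
  have hba : ‖b n - a n‖ ≤ ‖a n - S (a n)‖ := by
    have : b n - a n = δ n • (S (a n) - a n) := by rw [h.b_eq n]; module
    rw [this, norm_smul_of_nonneg hδ.1, norm_sub_rev]
    exact mul_le_of_le_one_left (norm_nonneg _) hδ.2
  have hcSa : ‖c (n + 1) - S (a n)‖ ≤ ‖a n - S (a n)‖ :=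
    (h.c_succ n ▸ hS _ hn.2.2 _ hn.2.1).trans hba
  have hac : ‖a n - c (n + 1)‖ ≤ 2 * ‖a n - S (a n)‖ := by
    linarith [norm_sub_le_norm_sub_add_norm_sub (a n) (S (a n)) (c (n + 1)),
      norm_sub_rev (S (a n)) (c (n + 1))]
  linarith [norm_sub_le_norm_sub_add_norm_sub (c (n + 1)) (S (a n)) (S (c (n + 1))),
    hS _ hn.2.1 _ hc]

theorem tendsto_norm_sub_apply [UniformConvexSpace E] (h : IsIteration S δ a b c)
    (hS : ∀ u ∈ J, ∀ v ∈ J, ‖S u - S v‖ ≤ ‖u - v‖)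
    (hmem : ∀ n, c n ∈ J ∧ a n ∈ J ∧ b n ∈ J) {m : ℝ} (hm : 0 < m)
    (hδ : ∀ n, m ≤ δ n ∧ δ n ≤ 1 - m) {q : E} (hq : q ∈ J) (hSq : S q = q) :
    Tendsto (fun n => ‖c n - S (c n)‖) atTop (𝓝 0) := by
  have hδ' : ∀ n, δ n ∈ Icc (0 : ℝ) 1 := fun n => ⟨by linarith [hδ n], by linarith [hδ n]⟩
  refine (tendsto_add_atTop_iff_nat 1).1 (squeeze_zero (fun _ => norm_nonneg _)
    (fun n => h.norm_c_succ_sub_apply_le hS (hmem n) (hmem (n + 1)).1 (hδ' n)) ?_)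
  simpa using (h.tendsto_norm_a_sub_apply hS hmem hm hδ hq hSq).const_mul 3

end IsIteration

end

theorem stmt_7_general {G : Type*} [NormedAddCommGroup G] [NormedSpace ℝ G] [CompleteSpace G]
    [UniformConvexSpace G]
    (hOpial : ∀ (x : ℕ → G) (p : G),
      (∀ f : G →L[ℝ] ℝ, Tendsto (fun n => f (x n)) atTop (nhds (f p))) →
        ∀ y : G, y ≠ p →
          limsup (fun n => ‖x n - p‖) atTop < limsup (fun n => ‖x n - y‖) atTop)
    (J : Set G) (hJcl : IsClosed J) (hJconv : Convex ℝ J)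
    (S : G → G) (hSJ : ∀ x ∈ J, S x ∈ J)
    (hS : ∀ u ∈ J, ∀ v ∈ J, ‖S u - S v‖ ≤ ‖u - v‖)
    (hFne : ∃ q ∈ J, S q = q)
    (δ : ℕ → ℝ) (w v : ℝ) (hw : 0 < w) (hv : v < 1)
    (hδ : ∀ n, w ≤ δ n ∧ δ n ≤ v)
    (a b c : ℕ → G) (hc1 : c 1 ∈ J)
    (ha : ∀ n, 1 ≤ n → a n = S (c n))
    (hb : ∀ n, 1 ≤ n → b n = (1 - δ n) • a n + δ n • S (a n))
    (hc : ∀ n, 1 ≤ n → c (n + 1) = S (b n)) :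
    ∃ q, q ∈ J ∧ S q = q ∧
      ∀ f : G →L[ℝ] ℝ, Tendsto (fun n => f (c n)) atTop (nhds (f q)) := by
  set c' : ℕ → G := fun n => c (n + 1)
  have hit : IsIteration S (fun n => δ (n + 1)) (fun n => a (n + 1)) (fun n => b (n + 1)) c' :=
    ⟨fun n => ha _ (by omega), fun n => hb _ (by omega), fun n => hc _ (by omega)⟩
  set m := min w (1 - v)
  have hm : 0 < m := lt_min hw (by linarith)
  have hδm : ∀ n, m ≤ δ (n + 1) ∧ δ (n + 1) ≤ 1 - m := fun n =>
    ⟨(min_le_left _ _).trans (hδ _).1, by linarith [min_le_right w (1 - v), (hδ (n + 1)).2]⟩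
  have hδ₀₁ : ∀ n, δ (n + 1) ∈ Icc (0 : ℝ) 1 := fun n =>
    ⟨by linarith [hδm n], by linarith [hδm n]⟩
  have hmem := hit.mem hJconv hSJ hδ₀₁ hc1
  obtain ⟨q₀, hq₀J, hSq₀⟩ := hFne
  have hM : ∀ n, ‖c' n‖ ≤ ‖q₀‖ + ‖c' 0 - q₀‖ := fun n => by
    linarith [norm_le_insert' (c' n) q₀,
      hit.antitone_norm_sub_fixedPoint hS hmem hδ₀₁ hq₀J hSq₀ (Nat.zero_le n)]
  have hreg := hit.tendsto_norm_sub_apply hS hmem hm hδm hq₀J hSq₀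
  have hKJ : closure (convexHull ℝ (range c')) ⊆ J :=
    closure_minimal (convexHull_min (range_subset_iff.2 fun n => (hmem n).1) hJconv) hJcl
  have hO : OpialProperty G := hOpial
  obtain ⟨q, ⟨hqJ, hSq⟩, hq⟩ := hO.exists_weakTendsto hM (F := {q ∈ J | S q = q})
    (fun q hq => ⟨_, hit.tendsto_norm_sub_fixedPoint hS hmem hδ₀₁ hq.1 hq.2⟩)
    fun g hg φ hφ hφg => ⟨hKJ hg, hO.apply_eq_of_weakTendsto hS (fun k => (hmem _).1)
      (fun k => hM _) (hKJ hg) hφg (hreg.comp hφ.tendsto_atTop)⟩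
  exact ⟨q, hqJ, hSq, fun f => (tendsto_add_atTop_iff_nat 1).1 (hq f)⟩

/-- in a uniformly convex Banach space satisfying Opial's condition,
the iteration (1.2) converges weakly to a fixed point of the nonexpansive map `S`. -/
theorem stmt_7 {G : Type*} [NormedAddCommGroup G] [NormedSpace ℝ G] [CompleteSpace G]
    [UniformConvexSpace G]
    (hOpial : ∀ (x : ℕ → G) (p : G),
      (∀ f : G →L[ℝ] ℝ, Tendsto (fun n => f (x n)) atTop (nhds (f p))) →
        ∀ y : G, y ≠ p →
          limsup (fun n => ‖x n - p‖) atTop < limsup (fun n => ‖x n - y‖) atTop)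
    (J : Set G) (hJne : J.Nonempty) (hJcl : IsClosed J) (hJconv : Convex ℝ J)
    (S : G → G) (hSJ : ∀ x ∈ J, S x ∈ J)
    (hS : ∀ u ∈ J, ∀ v ∈ J, ‖S u - S v‖ ≤ ‖u - v‖)
    (hFne : ∃ q ∈ J, S q = q)
    (δ : ℕ → ℝ) (w v : ℝ) (hw : 0 < w) (hv : v < 1)
    (hδ : ∀ n, w ≤ δ n ∧ δ n ≤ v)
    (a b c : ℕ → G) (hc1 : c 1 ∈ J)
    (ha : ∀ n, 1 ≤ n → a n = S (c n))
    (hb : ∀ n, 1 ≤ n → b n = (1 - δ n) • a n + δ n • S (a n))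
    (hc : ∀ n, 1 ≤ n → c (n + 1) = S (b n)) :
    ∃ q, q ∈ J ∧ S q = q ∧
      ∀ f : G →L[ℝ] ℝ, Tendsto (fun n => f (c n)) atTop (nhds (f q)) :=
  stmt_7_general hOpial J hJcl hJconv S hSJ hS hFne δ w v hw hv hδ a b c hc1 ha hb hc
end

section
/- Let J be a nonempty closed convex subset of a uniformly convex Banach space G and S : J → J a nonexpansive mapping whose fixed point set F(S) is nonempty. Suppose S satisfies condition (A): there exists a nondecreasing function g : [0,∞) → [0,∞) with g(0) = 0 and g(r) > 0 for all r > 0 such that ‖u − Su‖ ≥ g(d(u, F(S))) for all u ∈ J. Let {δₙ} satisfy 0 < w ≤ δₙ ≤ v < 1 for some constants w, v, and let {cₙ} be generated by the iteration (1.2). Then {cₙ} converges strongly to a fixed point of S. -/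
/-!
The iterates are Fejér monotone with respect to `F(S)`: `‖cₙ - q‖` is nonincreasing for every
fixed point `q`. If the residual `‖S cₙ - S² cₙ‖` stayed above some `ε > 0`, uniform convexity
applied to `S cₙ - q` and `S² cₙ - q` (norms at most `‖cₙ - q‖`, difference at least `ε`) would
make `‖cₙ - q‖` drop by a fixed amount at every step, which is impossible. Since one step at most
triples the residual, condition (A) then gives `d(cₙ, F(S))` arbitrarily small, and Fejér
monotonicity turns this into a Cauchy sequence whose limit lies in the closed set `F(S)`.
-/

open Filter Topology

theorem norm_one_sub_smul_add_smul_le_s10 {E : Type*} [SeminormedAddCommGroup E] [NormedSpace ℝ E]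
    {x y : E} {r d s t : ℝ} (hx : ‖x‖ ≤ r) (hy : ‖y‖ ≤ r) (hxy : ‖x + y‖ ≤ 2 * r - d)
    (hs : 0 ≤ s) (hst : s ≤ t) (hst' : s ≤ 1 - t) :
    ‖(1 - t) • x + t • y‖ ≤ r - s * d := by
  have hsplit : (1 - t) • x + t • y = s • (x + y) + (1 - t - s) • x + (t - s) • y := by module
  calc ‖(1 - t) • x + t • y‖
      ≤ ‖s • (x + y)‖ + ‖(1 - t - s) • x‖ + ‖(t - s) • y‖ := hsplit ▸ norm_add₃_le
    _ = s * ‖x + y‖ + (1 - t - s) * ‖x‖ + (t - s) * ‖y‖ := by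
      rw [norm_smul_of_nonneg hs, norm_smul_of_nonneg (by linarith),
        norm_smul_of_nonneg (by linarith)]
    _ ≤ s * (2 * r - d) + (1 - t - s) * r + (t - s) * r := by gcongr
    _ = r - s * d := by ring

section UniformConvex

variable {E : Type*} [NormedAddCommGroup E] [NormedSpace ℝ E] [UniformConvexSpace E] {ε : ℝ}

/-- Unlike `exists_forall_closed_ball_dist_add_le_two_mul_sub`, the gap `d` is uniform in the
radius `ρ ≤ R`; this works because `ε ≤ ‖x - y‖` forces `ε / 2 ≤ ρ`. -/
theorem exists_forall_norm_add_le_two_mul_sub_of_le (hε : 0 < ε) (R : ℝ) :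
    ∃ d, 0 < d ∧ ∀ ρ ≤ R, ∀ ⦃x : E⦄, ‖x‖ ≤ ρ → ∀ ⦃y⦄, ‖y‖ ≤ ρ → ε ≤ ‖x - y‖ →
      ‖x + y‖ ≤ 2 * ρ - d := by
  obtain hR | hR := le_or_gt R 0
  · refine ⟨1, one_pos, fun ρ hρ x hx y hy hxy => absurd hxy (not_le.2 ?_)⟩
    linarith [norm_sub_le x y]
  obtain ⟨δ, hδ, h⟩ := exists_forall_closed_ball_dist_add_le_two_sub E (div_pos hε hR)
  refine ⟨δ * (ε / 2), by positivity, fun ρ hρR x hx y hy hxy => ?_⟩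
  have hερ : ε / 2 ≤ ρ := by linarith [norm_sub_le x y]
  have hρ : 0 < ρ := by linarith
  have hunit : ∀ z : E, ‖z‖ ≤ ρ → ‖ρ⁻¹ • z‖ ≤ 1 := fun z hz => by
    rw [norm_smul_of_nonneg (by positivity), inv_mul_le_iff₀ hρ]
    linarith
  have hsep : ε / R ≤ ‖ρ⁻¹ • x - ρ⁻¹ • y‖ := by
    rw [← smul_sub, norm_smul_of_nonneg (by positivity), inv_mul_eq_div]
    calc ε / R ≤ ε / ρ := by gcongr
      _ ≤ ‖x - y‖ / ρ := by gcongr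
  have hsum := h (hunit x hx) (hunit y hy) hsep
  rw [← smul_add, norm_smul_of_nonneg (by positivity), inv_mul_le_iff₀ hρ] at hsum
  nlinarith

theorem exists_forall_norm_one_sub_smul_add_smul_le_sub (hε : 0 < ε) (R : ℝ) {m : ℝ}
    (hm : 0 < m) :
    ∃ κ, 0 < κ ∧ ∀ ρ ≤ R, ∀ ⦃x : E⦄, ‖x‖ ≤ ρ → ∀ ⦃y⦄, ‖y‖ ≤ ρ → ε ≤ ‖x - y‖ →
      ∀ t, m ≤ t → t ≤ 1 - m → ‖(1 - t) • x + t • y‖ ≤ ρ - κ := by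
  obtain ⟨d, hd, h⟩ := exists_forall_norm_add_le_two_mul_sub_of_le (E := E) hε R
  exact ⟨m * d, by positivity, fun ρ hρ x hx y hy hxy t hmt htm =>
    norm_one_sub_smul_add_smul_le_s10 hx hy (h ρ hρ hx hy hxy) hm.le hmt (by linarith)⟩

end UniformConvex

theorem exists_mem_tendsto_of_antitone_dist {X : Type*} [MetricSpace X] [CompleteSpace X]
    {F : Set X} {x : ℕ → X} (hF : IsClosed F) (hx : ∀ q ∈ F, Antitone fun n => dist (x n) q)
    (hclose : ∀ ε > 0, ∃ n, ∃ q ∈ F, dist (x n) q < ε) :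
    ∃ q ∈ F, Tendsto x atTop (𝓝 q) := by
  have hnear : ∀ ε > 0, ∃ N, ∃ q ∈ F, ∀ n ≥ N, dist (x n) q < ε := fun ε hε => by
    obtain ⟨N, q, hq, hNq⟩ := hclose ε hε
    exact ⟨N, q, hq, fun n hn => (hx q hq hn).trans_lt hNq⟩
  have hcauchy : CauchySeq x := Metric.cauchySeq_iff.2 fun ε hε => by
    obtain ⟨N, q, -, hN⟩ := hnear (ε / 2) (half_pos hε)
    exact ⟨N, fun m hm n hn =>
      (dist_triangle_right _ _ q).trans_lt (by linarith [hN m hm, hN n hn])⟩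
  obtain ⟨L, hL⟩ := cauchySeq_tendsto_of_complete hcauchy
  refine ⟨L, hF.closure_subset (Metric.mem_closure_iff.2 fun ε hε => ?_), hL⟩
  obtain ⟨N, q, hq, hN⟩ := hnear (ε / 2) (half_pos hε)
  have hLq : dist L q ≤ ε / 2 :=
    le_of_tendsto (hL.dist tendsto_const_nhds) (eventually_atTop.2 ⟨N, fun n hn => (hN n hn).le⟩)
  exact ⟨q, hq, by linarith⟩

theorem ContinuousOn.isClosed_fixedPointsOn {X : Type*} [TopologicalSpace X] [T2Space X]
    {J : Set X} {S : X → X} (hS : ContinuousOn S J) (hJ : IsClosed J) :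
    IsClosed {q | q ∈ J ∧ S q = q} :=
  (hS.prodMk continuousOn_id).preimage_isClosed_of_isClosed hJ isClosed_diagonal

section Iteration

variable {G : Type*} [NormedAddCommGroup G] {J : Set G} {S : G → G}

theorem norm_apply_sub_le_of_fixed (hS : ∀ u ∈ J, ∀ v ∈ J, ‖S u - S v‖ ≤ ‖u - v‖) {u q : G}
    (hu : u ∈ J) (hq : q ∈ J) (hSq : S q = q) : ‖S u - q‖ ≤ ‖u - q‖ := by
  simpa only [hSq] using hS u hu q hq

variable [NormedSpace ℝ G]

/-- One step `cₙ ↦ cₙ₊₁` of the iteration (1.2), with `t = δₙ`. -/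
def iterStep (S : G → G) (t : ℝ) (u : G) : G :=
  S ((1 - t) • S u + t • S (S u))

theorem iterStep_mem (hJ : Convex ℝ J) (hSJ : ∀ x ∈ J, S x ∈ J) {t : ℝ} (ht₀ : 0 ≤ t)
    (ht₁ : t ≤ 1) {u : G} (hu : u ∈ J) : iterStep S t u ∈ J :=
  hSJ _ (hJ (hSJ u hu) (hSJ _ (hSJ u hu)) (sub_nonneg.2 ht₁) ht₀ (sub_add_cancel 1 t))

/-- Fixed points are centres of balls whose traces on `J` are `S`-invariant, so this is
`iterStep_mem` for such a trace. -/
theorem norm_iterStep_sub_le (hJ : Convex ℝ J) (hSJ : ∀ x ∈ J, S x ∈ J)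
    (hS : ∀ u ∈ J, ∀ v ∈ J, ‖S u - S v‖ ≤ ‖u - v‖) {t : ℝ} (ht₀ : 0 ≤ t) (ht₁ : t ≤ 1)
    {u q : G} (hu : u ∈ J) (hq : q ∈ J) (hSq : S q = q) : ‖iterStep S t u - q‖ ≤ ‖u - q‖ := by
  have hmaps : ∀ x ∈ J ∩ Metric.closedBall q ‖u - q‖, S x ∈ J ∩ Metric.closedBall q ‖u - q‖ :=
    fun x ⟨hxJ, hxq⟩ => ⟨hSJ x hxJ, by
      rw [Metric.mem_closedBall, dist_eq_norm] at hxq ⊢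
      exact (norm_apply_sub_le_of_fixed hS hxJ hq hSq).trans hxq⟩
  have hmem := iterStep_mem (hJ.inter (convex_closedBall q _)) hmaps ht₀ ht₁
    (u := u) ⟨hu, by rw [Metric.mem_closedBall, dist_eq_norm]⟩
  simpa only [Metric.mem_closedBall, dist_eq_norm] using hmem.2

theorem norm_iterStep_sub_apply_le (hJ : Convex ℝ J) (hSJ : ∀ x ∈ J, S x ∈ J)
    (hS : ∀ u ∈ J, ∀ v ∈ J, ‖S u - S v‖ ≤ ‖u - v‖) {t : ℝ} (ht₀ : 0 ≤ t) (ht₁ : t ≤ 1)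
    {u : G} (hu : u ∈ J) :
    ‖iterStep S t u - S (iterStep S t u)‖ ≤ 3 * ‖S u - S (S u)‖ := by
  set a := S u
  set b := (1 - t) • a + t • S a
  have ha : a ∈ J := hSJ u hu
  have hb : b ∈ J := hJ ha (hSJ a ha) (sub_nonneg.2 ht₁) ht₀ (sub_add_cancel 1 t)
  have hba : ‖b - a‖ ≤ ‖a - S a‖ := by
    have : b - a = t • (S a - a) := by module
    rw [this, norm_smul_of_nonneg ht₀, norm_sub_rev]
    exact mul_le_of_le_one_left (norm_nonneg _) ht₁
  calc ‖S b - S (S b)‖ ≤ ‖b - S b‖ := hS b hb _ (hSJ b hb)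
    _ = ‖(b - a) + (a - S a) + (S a - S b)‖ := by congr 1; abel
    _ ≤ ‖b - a‖ + ‖a - S a‖ + ‖S a - S b‖ := norm_add₃_le
    _ ≤ ‖b - a‖ + ‖a - S a‖ + ‖b - a‖ := by
      gcongr; rw [norm_sub_rev b]; exact hS a ha b hb
    _ ≤ 3 * ‖a - S a‖ := by linarith

theorem exists_forall_norm_iterStep_sub_le_sub [UniformConvexSpace G] (hJ : Convex ℝ J)
    (hSJ : ∀ x ∈ J, S x ∈ J) (hS : ∀ u ∈ J, ∀ v ∈ J, ‖S u - S v‖ ≤ ‖u - v‖) {ε m : ℝ}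
    (hε : 0 < ε) (hm : 0 < m) (R : ℝ) :
    ∃ κ, 0 < κ ∧ ∀ u ∈ J, ∀ q ∈ J, S q = q → ‖u - q‖ ≤ R → ε ≤ ‖S u - S (S u)‖ →
      ∀ t, m ≤ t → t ≤ 1 - m → ‖iterStep S t u - q‖ ≤ ‖u - q‖ - κ := by
  obtain ⟨κ, hκ, h⟩ := exists_forall_norm_one_sub_smul_add_smul_le_sub (E := G) hε R hm
  refine ⟨κ, hκ, fun u hu q hq hSq huR hres t hmt htm => ?_⟩
  have ha : S u ∈ J := hSJ u hu
  have hx : ‖S u - q‖ ≤ ‖u - q‖ := norm_apply_sub_le_of_fixed hS hu hq hSq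
  have hy : ‖S (S u) - q‖ ≤ ‖u - q‖ := (norm_apply_sub_le_of_fixed hS ha hq hSq).trans hx
  have hxy : ε ≤ ‖(S u - q) - (S (S u) - q)‖ := by rwa [sub_sub_sub_cancel_right]
  have hb : (1 - t) • S u + t • S (S u) ∈ J :=
    hJ ha (hSJ _ ha) (by linarith) (by linarith) (sub_add_cancel 1 t)
  calc ‖iterStep S t u - q‖ ≤ ‖(1 - t) • S u + t • S (S u) - q‖ :=
        norm_apply_sub_le_of_fixed hS hb hq hSq
    _ = ‖(1 - t) • (S u - q) + t • (S (S u) - q)‖ := by congr 1; module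
    _ ≤ ‖u - q‖ - κ := h _ huR hx hy hxy t hmt htm

variable {δ : ℕ → ℝ} {x : ℕ → G}

theorem mem_of_iterStep (hJ : Convex ℝ J) (hSJ : ∀ x ∈ J, S x ∈ J)
    (hδ : ∀ n, 0 ≤ δ n ∧ δ n ≤ 1) (hx₀ : x 0 ∈ J)
    (hx : ∀ n, x (n + 1) = iterStep S (δ n) (x n)) (n : ℕ) : x n ∈ J := by
  induction n with
  | zero => exact hx₀
  | succ n ih => exact hx n ▸ iterStep_mem hJ hSJ (hδ n).1 (hδ n).2 ih

theorem antitone_norm_sub_of_iterStep (hJ : Convex ℝ J) (hSJ : ∀ x ∈ J, S x ∈ J)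
    (hS : ∀ u ∈ J, ∀ v ∈ J, ‖S u - S v‖ ≤ ‖u - v‖) (hδ : ∀ n, 0 ≤ δ n ∧ δ n ≤ 1)
    (hx₀ : x 0 ∈ J) (hx : ∀ n, x (n + 1) = iterStep S (δ n) (x n)) {q : G} (hq : q ∈ J)
    (hSq : S q = q) : Antitone fun n => ‖x n - q‖ :=
  antitone_nat_of_succ_le fun n => hx n ▸
    norm_iterStep_sub_le hJ hSJ hS (hδ n).1 (hδ n).2 (mem_of_iterStep hJ hSJ hδ hx₀ hx n) hq hSq

/-- If the residual stayed above `ε`, uniform convexity would make `‖xₙ - q‖` drop by a fixed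
`κ > 0` at every step. -/
theorem exists_norm_apply_sub_apply_lt_of_iterStep [UniformConvexSpace G] (hJ : Convex ℝ J)
    (hSJ : ∀ x ∈ J, S x ∈ J) (hS : ∀ u ∈ J, ∀ v ∈ J, ‖S u - S v‖ ≤ ‖u - v‖)
    (hF : ∃ q ∈ J, S q = q) {w v : ℝ} (hw : 0 < w) (hv : v < 1)
    (hδ : ∀ n, w ≤ δ n ∧ δ n ≤ v) (hx₀ : x 0 ∈ J)
    (hx : ∀ n, x (n + 1) = iterStep S (δ n) (x n)) {ε : ℝ} (hε : 0 < ε) :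
    ∃ n, ‖S (x n) - S (S (x n))‖ < ε := by
  obtain ⟨q, hq, hSq⟩ := hF
  have hδ₀₁ : ∀ n, 0 ≤ δ n ∧ δ n ≤ 1 :=
    fun n => ⟨hw.le.trans (hδ n).1, (hδ n).2.trans hv.le⟩
  have hxJ := mem_of_iterStep hJ hSJ hδ₀₁ hx₀ hx
  have hanti := antitone_norm_sub_of_iterStep hJ hSJ hS hδ₀₁ hx₀ hx hq hSq
  obtain ⟨κ, hκ, hdrop⟩ := exists_forall_norm_iterStep_sub_le_sub hJ hSJ hS hε
    (lt_min hw (sub_pos.2 hv)) ‖x 0 - q‖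
  by_contra! hres
  have hstep : ∀ n, ‖x (n + 1) - q‖ ≤ ‖x n - q‖ - κ := fun n => hx n ▸
    hdrop _ (hxJ n) q hq hSq (hanti (Nat.zero_le n)) (hres n) _
      ((min_le_left _ _).trans (hδ n).1) (by linarith [min_le_right w (1 - v), (hδ n).2])
  have hlinear : ∀ n : ℕ, ‖x n - q‖ ≤ ‖x 0 - q‖ - n * κ := by
    intro n
    induction n with
    | zero => simp
    | succ n ih => push_cast; linarith [hstep n]
  obtain ⟨n, hn⟩ := exists_nat_gt (‖x 0 - q‖ / κ)
  rw [div_lt_iff₀ hκ] at hn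
  linarith [hlinear n, norm_nonneg (x n - q)]

end Iteration

theorem stmt_10_general {G : Type*} [NormedAddCommGroup G] [NormedSpace ℝ G] [CompleteSpace G]
    [UniformConvexSpace G]
    (J : Set G) (hJcl : IsClosed J) (hJconv : Convex ℝ J)
    (S : G → G) (hSJ : ∀ x ∈ J, S x ∈ J)
    (hS : ∀ u ∈ J, ∀ v ∈ J, ‖S u - S v‖ ≤ ‖u - v‖)
    (hFne : ∃ q ∈ J, S q = q)
    (g : ℝ → ℝ) (hg_mono : MonotoneOn g (Set.Ici 0))
    (hg_pos : ∀ r : ℝ, 0 < r → 0 < g r)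
    (hcondA : ∀ u ∈ J, g (Metric.infDist u {q | q ∈ J ∧ S q = q}) ≤ ‖u - S u‖)
    (δ : ℕ → ℝ) (w v : ℝ) (hw : 0 < w) (hv : v < 1)
    (hδ : ∀ n, w ≤ δ n ∧ δ n ≤ v)
    (a b c : ℕ → G) (hc1 : c 1 ∈ J)
    (ha : ∀ n, 1 ≤ n → a n = S (c n))
    (hb : ∀ n, 1 ≤ n → b n = (1 - δ n) • a n + δ n • S (a n))
    (hc : ∀ n, 1 ≤ n → c (n + 1) = S (b n)) :
    ∃ q, q ∈ J ∧ S q = q ∧ Tendsto c atTop (nhds q) := by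
  set F := {q | q ∈ J ∧ S q = q}
  set x : ℕ → G := fun n => c (n + 1)
  have hx : ∀ n, x (n + 1) = iterStep S (δ (n + 1)) (x n) := fun n => by
    simp only [x, iterStep, hc (n + 1) (by omega), hb (n + 1) (by omega), ha (n + 1) (by omega)]
  have hδ' : ∀ n, 0 ≤ δ (n + 1) ∧ δ (n + 1) ≤ 1 :=
    fun n => ⟨hw.le.trans (hδ _).1, (hδ _).2.trans hv.le⟩
  have hxJ := mem_of_iterStep hJconv hSJ hδ' hc1 hx
  have hlip : LipschitzOnWith 1 S J := .of_dist_le_mul fun u hu v hv => by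
    simpa [dist_eq_norm] using hS u hu v hv
  have hFcl : IsClosed F := hlip.continuousOn.isClosed_fixedPointsOn hJcl
  suffices hclose : ∀ η > 0, ∃ n, ∃ q ∈ F, dist (x n) q < η by
    obtain ⟨q, ⟨hqJ, hSq⟩, hq⟩ := exists_mem_tendsto_of_antitone_dist hFcl (fun q ⟨hqJ, hSq⟩ => by
      simpa only [dist_eq_norm] using
        antitone_norm_sub_of_iterStep hJconv hSJ hS hδ' hc1 hx hqJ hSq) hclose
    exact ⟨q, hqJ, hSq, (tendsto_add_atTop_iff_nat 1).1 hq⟩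
  intro η hη
  obtain ⟨n, hn⟩ := exists_norm_apply_sub_apply_lt_of_iterStep hJconv hSJ hS hFne hw hv
    (fun n => hδ (n + 1)) hc1 hx (div_pos (hg_pos η hη) three_pos)
  have hgη : g (Metric.infDist (x (n + 1)) F) < g η := calc
    _ ≤ ‖x (n + 1) - S (x (n + 1))‖ := hcondA _ (hxJ _)
    _ ≤ 3 * ‖S (x n) - S (S (x n))‖ := hx n ▸
      norm_iterStep_sub_apply_le hJconv hSJ hS (hδ' n).1 (hδ' n).2 (hxJ n)
    _ < g η := by linarith
  have hlt : Metric.infDist (x (n + 1)) F < η := lt_of_not_ge fun hle =>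
    hgη.not_ge (hg_mono hη.le Metric.infDist_nonneg hle)
  obtain ⟨q, hq, hdist⟩ := (Metric.infDist_lt_iff (hFne.imp fun _ => id)).1 hlt
  exact ⟨n + 1, q, hq, hdist⟩

/-- if the nonexpansive map `S` satisfies condition (A) of Senter–Dotson,
then the iteration (1.2) converges strongly to a fixed point of `S`. -/
theorem stmt_10 {G : Type*} [NormedAddCommGroup G] [NormedSpace ℝ G] [CompleteSpace G]
    [UniformConvexSpace G]
    (J : Set G) (hJne : J.Nonempty) (hJcl : IsClosed J) (hJconv : Convex ℝ J)
    (S : G → G) (hSJ : ∀ x ∈ J, S x ∈ J)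
    (hS : ∀ u ∈ J, ∀ v ∈ J, ‖S u - S v‖ ≤ ‖u - v‖)
    (hFne : ∃ q ∈ J, S q = q)
    (g : ℝ → ℝ) (hg_mono : MonotoneOn g (Set.Ici 0)) (hg0 : g 0 = 0)
    (hg_pos : ∀ r : ℝ, 0 < r → 0 < g r)
    (hcondA : ∀ u ∈ J, g (Metric.infDist u {q | q ∈ J ∧ S q = q}) ≤ ‖u - S u‖)
    (δ : ℕ → ℝ) (w v : ℝ) (hw : 0 < w) (hv : v < 1)
    (hδ : ∀ n, w ≤ δ n ∧ δ n ≤ v)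
    (a b c : ℕ → G) (hc1 : c 1 ∈ J)
    (ha : ∀ n, 1 ≤ n → a n = S (c n))
    (hb : ∀ n, 1 ≤ n → b n = (1 - δ n) • a n + δ n • S (a n))
    (hc : ∀ n, 1 ≤ n → c (n + 1) = S (b n)) :
    ∃ q, q ∈ J ∧ S q = q ∧ Tendsto c atTop (nhds q) :=
  stmt_10_general J hJcl hJconv S hSJ hS hFne g hg_mono hg_pos hcondA δ w v hw hv hδ a b c hc1 ha hb
    hc
end
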